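/- arXiv:1411.1539 — 4 statements merged into one kernel-verified Lean document; each statement's English description precedes it below -/
import Mathlib

section
/- Let F : ℝ² → ℂ be continuous and satisfy F(x, ω+1) = F(x,ω) and F(x+1, ω) = e^{2πiω} F(x,ω) for all (x,ω) ∈ ℝ². Then F has a zero in [0,1) × [0,1). -/
/-!
If `F` had no zero, it would have no zero at all by (quasi-)periodicity, and since `ℝ²` is simply
connected it would have a continuous logarithm `G`. The two functional equations force
`G (x, ω + 1) - G (x, ω)` and `G (x + 1, ω) - G (x, ω) - 2πiω` to be continuous with values in
`2πiℤ`, hence constant. Computing `G (1, 1) - G (0, 0)` along the two paths `(0,0) → (1,0) → (1,1)`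
and `(0,0) → (0,1) → (1,1)` then gives two values differing by `2πi`.
-/

open Complex

theorem Complex.exists_continuous_exp_eq {X : Type*} [TopologicalSpace X] [SimplyConnectedSpace X]
    [LocallyPathConnectedSpace X] {f : X → ℂ} (hf : Continuous f) (hf₀ : ∀ x, f x ≠ 0) :
    ∃ g : X → ℂ, Continuous g ∧ ∀ x, exp (g x) = f x := by
  obtain ⟨x₀⟩ : Nonempty X := inferInstance
  obtain ⟨g, ⟨-, hg⟩, -⟩ := isCoveringMapOn_exp.existsUnique_continuousMap_lifts ⟨f, hf⟩
    (exp_log (hf₀ x₀)) hf₀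
  exact ⟨g, g.continuous, congrFun hg⟩

theorem Complex.const_of_continuous_of_exp_eq_one {X : Type*} [TopologicalSpace X]
    [PreconnectedSpace X] {d : X → ℂ} (hd : Continuous d) (h₁ : ∀ x, exp (d x) = 1) (x y : X) :
    d x = d y :=
  isCoveringMap_exp.const_of_comp hd (fun x y ↦ Subtype.ext <| (h₁ x).trans (h₁ y).symm) x y

theorem apply_fract_eq_zero {α : Type*} [Zero α] {F : ℝ × ℝ → α}
    (hper : ∀ x ω, F (x, ω + 1) = F (x, ω)) (hzero : ∀ x ω, F (x + 1, ω) = 0 ↔ F (x, ω) = 0)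
    {x ω : ℝ} (h : F (x, ω) = 0) : F (Int.fract x, Int.fract ω) = 0 := by
  have hperω : Function.Periodic (fun ω ↦ F (Int.fract x, ω)) 1 := fun ω ↦ hper _ ω
  have hperx : Function.Periodic (fun x ↦ F (x, ω) = 0) 1 := fun x ↦ propext (hzero x ω)
  have hfract_x : F (Int.fract x, ω) = 0 := by
    simpa only [mul_one, Int.self_sub_floor] using (hperx.sub_int_mul_eq (x := x) ⌊x⌋).mpr h
  simpa only [mul_one, Int.self_sub_floor] using
    (hperω.sub_int_mul_eq (x := ω) ⌊ω⌋).trans hfract_x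

/-- A continuous function `F : ℝ² → ℂ` that is `1`-periodic in the second variable
and quasi-periodic in the first variable must vanish somewhere in `[0,1) × [0,1)`. -/
theorem quasiperiodic_has_zero
    (F : ℝ × ℝ → ℂ) (hF : Continuous F)
    (hper : ∀ x ω : ℝ, F (x, ω + 1) = F (x, ω))
    (hqper : ∀ x ω : ℝ, F (x + 1, ω) = Complex.exp (2 * Real.pi * Complex.I * ω) * F (x, ω)) :
    ∃ p ∈ Set.Ico (0:ℝ) 1 ×ˢ Set.Ico (0:ℝ) 1, F p = 0 := by
  by_contra! hF₀
  have hne : ∀ p, F p ≠ 0 := fun ⟨x, ω⟩ h ↦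
    hF₀ _ ⟨⟨Int.fract_nonneg x, Int.fract_lt_one x⟩, ⟨Int.fract_nonneg ω, Int.fract_lt_one ω⟩⟩
      (apply_fract_eq_zero hper (fun x ω ↦ by simp [hqper, exp_ne_zero]) h)
  obtain ⟨G, hG, hGF⟩ := exists_continuous_exp_eq hF hne
  have hx := const_of_continuous_of_exp_eq_one
    (d := fun p : ℝ × ℝ ↦ G (p.1 + 1, p.2) - G p - 2 * Real.pi * I * p.2) (by fun_prop)
    (fun p ↦ by simp [exp_sub, hGF, hqper, hne]) (0, 0) (0, 1)
  have hω := const_of_continuous_of_exp_eq_one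
    (d := fun p : ℝ × ℝ ↦ G (p.1, p.2 + 1) - G p) (by fun_prop)
    (fun p ↦ by simp [exp_sub, hGF, hper, hne]) (0, 0) (1, 0)
  exact two_pi_I_ne_zero (by norm_num at hx hω; linear_combination hx - hω)
end

section
/- Let a ≠ 0 and g₁(x) = |a|·e^{-ax}·χ_{[0,∞)}(sign(a)·x). Then for every N ∈ ℕ and all real numbers x₁ < … < x_N and y₁ < … < y_N, the matrix (g₁(x_j - y_k))_{j,k=1}^N has nonnegative determinant; i.e., the one-sided exponential is a totally positive function. -/
/-!
Pulling the positive factors `|a| e^{-a x_j}` out of the rows and `e^{a y_k}` out of the columns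
leaves the 0/1 matrix `[s y_k ≤ s x_j]` with `s = sign a`. For `s ≥ 0` its rows are indicators of
initial segments of the columns, of lengths increasing with `j`; for `s ≤ 0` the same holds for
its transpose. Such a staircase matrix has two equal rows, a zero row, or is lower unitriangular,
so its determinant is `0` or `1`.
-/

open Finset Matrix Real

namespace Fin

variable {N : ℕ}

lemma mem_iff_lt_card_of_isLowerSet {s : Finset (Fin N)} (hs : IsLowerSet (s : Set (Fin N)))
    (k : Fin N) : k ∈ s ↔ (k : ℕ) < #s := by
  rcases hs.eq_univ_or_Iio with h | ⟨a, h⟩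
  · rw [coe_eq_univ] at h
    simp [h]
  · rw [← coe_Iio, coe_inj] at h
    rw [h, mem_Iio, card_Iio, Fin.lt_def]

lemma val_eq_add_one_of_strictMono {f : Fin N → ℕ} (hf : StrictMono f) (hpos : ∀ j, 0 < f j)
    (hle : ∀ j, f j ≤ N) (j : Fin N) : f j = j + 1 := by
  let g : Fin N → Fin N := fun j => ⟨f j - 1, by have := hpos j; have := hle j; omega⟩
  have hg : StrictMono g := fun i j hij => by
    have := hf hij
    have := hpos i
    simp only [g, Fin.mk_lt_mk]
    omega
  have hgj : (g j : ℕ) = j := congrArg Fin.val (le_antisymm hg.apply_le hg.le_apply)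
  have := hpos j
  simp only [g] at hgj
  omega

end Fin

namespace Matrix

variable {R : Type*} [CommRing R]

lemma det_of_mul_mul {n : Type*} [Fintype n] [DecidableEq n] (u v : n → R) (A : n → n → R) :
    (of fun i j => u i * v j * A i j).det = (∏ i, u i) * (∏ j, v j) * (of A).det := by
  rw [mul_assoc, ← det_mul_row, ← det_mul_column]
  simp only [of_apply, mul_assoc]

variable {N : ℕ}

lemma det_of_lt_eq_zero_or_one {m : Fin N → ℕ} (hm : Monotone m) (hmN : ∀ j, m j ≤ N) :
    (of fun j k : Fin N => if (k : ℕ) < m j then (1 : R) else 0).det = 0 ∨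
      (of fun j k : Fin N => if (k : ℕ) < m j then (1 : R) else 0).det = 1 := by
  by_cases hinj : Function.Injective m
  swap
  · obtain ⟨i, j, hij, hne⟩ : ∃ i j, m i = m j ∧ i ≠ j := by
      simpa [Function.Injective] using hinj
    exact .inl (det_zero_of_row_eq hne (by funext k; simp [hij]))
  by_cases hzero : ∃ j, m j = 0
  · obtain ⟨j, hj⟩ := hzero
    exact .inl (det_eq_zero_of_row_eq_zero j fun k => by simp [hj])
  push Not at hzero
  have hval := Fin.val_eq_add_one_of_strictMono (hm.strictMono_of_injective hinj)
    (fun j => Nat.pos_of_ne_zero (hzero j)) hmN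
  have hlower : (of fun j k : Fin N => if (k : ℕ) < m j then (1 : R) else 0).IsLowerTriangular :=
    fun j k (hjk : j < k) => by simp [hval, hjk.not_ge]
  exact .inr (by rw [det_of_isLowerTriangular _ hlower]; simp [hval])

variable {α : Type*} [Preorder α] [DecidableLE α] {x y : Fin N → α}

lemma det_of_le_eq_zero_or_one (hx : Monotone x) (hy : Monotone y) :
    (of fun j k => if y k ≤ x j then (1 : R) else 0).det = 0 ∨
      (of fun j k => if y k ≤ x j then (1 : R) else 0).det = 1 := by
  let m : Fin N → ℕ := fun j => #{k | y k ≤ x j}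
  have hrow (j k : Fin N) : y k ≤ x j ↔ (k : ℕ) < m j := by
    have hlower : IsLowerSet (({k | y k ≤ x j} : Finset (Fin N)) : Set (Fin N)) := by
      intro k k' hkk' hk
      simp only [coe_filter, mem_univ, true_and, Set.mem_ofPred_eq] at hk ⊢
      exact (hy hkk').trans hk
    simpa using Fin.mem_iff_lt_card_of_isLowerSet hlower k
  have hm : Monotone m := fun j j' hjj' =>
    card_le_card (monotone_filter_right _ fun _ _ hk => hk.trans (hx hjj'))
  simp_rw [hrow]
  exact det_of_lt_eq_zero_or_one hm fun j => (card_le_univ _).trans_eq (Fintype.card_fin N)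

lemma det_of_le_eq_zero_or_one_of_antitone (hx : Antitone x) (hy : Antitone y) :
    (of fun j k => if y k ≤ x j then (1 : R) else 0).det = 0 ∨
      (of fun j k => if y k ≤ x j then (1 : R) else 0).det = 1 := by
  rw [← det_transpose]
  exact det_of_le_eq_zero_or_one (α := αᵒᵈ) hy.dual_right hx.dual_right

end Matrix

lemma one_sided_exponential_eq (a t s : ℝ) :
    |a| * exp (-a * (t - s)) * Set.indicator (Set.Ici 0) (fun _ => (1 : ℝ)) (sign a * (t - s)) =
      |a| * exp (-a * t) * exp (a * s) * if sign a * s ≤ sign a * t then 1 else 0 := by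
  rw [show -a * (t - s) = -a * t + a * s by ring, exp_add]
  simp only [Set.indicator_apply, Set.mem_Ici, mul_sub, sub_nonneg, mul_assoc]

theorem one_sided_exponential_totally_positive_general
    (a : ℝ)
    (g₁ : ℝ → ℝ)
    (hg₁ : ∀ x : ℝ, g₁ x =
      |a| * Real.exp (-a * x) *
        Set.indicator (Set.Ici (0:ℝ)) (fun _ => (1:ℝ)) (Real.sign a * x))
    (N : ℕ) (x y : Fin N → ℝ) (hx : StrictMono x) (hy : StrictMono y) :
    0 ≤ (Matrix.of fun j k : Fin N => g₁ (x j - y k)).det := by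
  simp_rw [hg₁, one_sided_exponential_eq, det_of_mul_mul]
  have hstaircase : (of fun j k => if sign a * y k ≤ sign a * x j then (1 : ℝ) else 0).det = 0 ∨
      (of fun j k => if sign a * y k ≤ sign a * x j then (1 : ℝ) else 0).det = 1 := by
    rcases le_total 0 (sign a) with hs | hs
    · exact det_of_le_eq_zero_or_one (R := ℝ)
        (hx.monotone.const_mul hs) (hy.monotone.const_mul hs)
    · exact det_of_le_eq_zero_or_one_of_antitone (R := ℝ)
        (hx.monotone.const_mul_of_nonpos hs) (hy.monotone.const_mul_of_nonpos hs)
  refine mul_nonneg (by positivity) ?_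
  rcases hstaircase with h | h <;> simp [h]

/-- The one-sided exponential `g₁(x) = |a| e^{-ax} χ_{[0,∞)}(sign(a)·x)` is a totally
positive function: all collocation determinants `det (g₁(x_j - y_k))` with
`x₁ < … < x_N`, `y₁ < … < y_N` are nonnegative. -/
theorem one_sided_exponential_totally_positive
    (a : ℝ) (ha : a ≠ 0)
    (g₁ : ℝ → ℝ)
    (hg₁ : ∀ x : ℝ, g₁ x =
      |a| * Real.exp (-a * x) *
        Set.indicator (Set.Ici (0:ℝ)) (fun _ => (1:ℝ)) (Real.sign a * x))
    (N : ℕ) (x y : Fin N → ℝ) (hx : StrictMono x) (hy : StrictMono y) :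
    0 ≤ (Matrix.of fun j k : Fin N => g₁ (x j - y k)).det :=
  one_sided_exponential_totally_positive_general a g₁ hg₁ N x y hx hy
end

section
/- Let D ⊂ ℂ be a domain, k ∈ ℕ, and (f_n) a sequence of holomorphic functions on D converging locally uniformly to f, such that each f_n has at most k zeros in D (counted as distinct points). Then either f is identically zero on D, or f has at most k zeros in D. -/
/-!
Around each of `k + 1` zeros of `f` draw a small circle on which `f` does not vanish (zeros of
a holomorphic function that is not identically zero are isolated), with the closed discs
pairwise disjoint. On each circle `|f|` is bounded below by some `m > 0`, so once
`|f_n - f| < m / 2` on the discs, `|f_n|` is smaller at the centre than anywhere on the circle,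
and the minimum modulus principle gives a zero of `f_n` in every disc: at least `k + 1` zeros.
-/

open Filter Metric Set Topology

theorem Complex.exists_zero_of_forall_mem_frontier_le_norm {E : Type*} [NormedAddCommGroup E]
    [NormedSpace ℂ E] [Nontrivial E] {g : E → ℂ} {U : Set E} {z : E} {C : ℝ}
    (hU : Bornology.IsBounded U) (hg : DiffContOnCl ℂ g U) (hC : ∀ w ∈ frontier U, C ≤ ‖g w‖)
    (hz : z ∈ closure U) (hgz : ‖g z‖ < C) : ∃ w ∈ closure U, g w = 0 := by
  by_contra! hne
  have hCpos : 0 < C := (norm_nonneg _).trans_lt hgz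
  have hinv : ‖(g z)⁻¹‖ ≤ C⁻¹ :=
    Complex.norm_le_of_forall_mem_frontier_norm_le hU (hg.inv hne)
      (fun w hw => by rw [Pi.inv_apply, norm_inv]; exact inv_anti₀ hCpos (hC w hw)) hz
  rw [norm_inv, inv_le_inv₀ (norm_pos_iff.2 (hne z hz)) hCpos] at hinv
  exact hinv.not_gt hgz

theorem TendstoUniformlyOn.eventually_exists_zero_mem_closedBall {ι : Type*} {l : Filter ι}
    {F : ι → ℂ → ℂ} {f : ℂ → ℂ} {z : ℂ} {r : ℝ} (hr : 0 < r)
    (hFf : TendstoUniformlyOn F f l (closedBall z r))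
    (hF : ∀ᶠ n in l, DiffContOnCl ℂ (F n) (ball z r)) (hf : ContinuousOn f (sphere z r))
    (hfz : f z = 0) (hf_sphere : ∀ w ∈ sphere z r, f w ≠ 0) :
    ∀ᶠ n in l, ∃ w ∈ closedBall z r, F n w = 0 := by
  obtain ⟨x, hx, hmin⟩ :=
    (isCompact_sphere z r).exists_isMinOn (NormedSpace.sphere_nonempty.2 hr.le) hf.norm
  have hm : 0 < ‖f x‖ := norm_pos_iff.2 (hf_sphere x hx)
  filter_upwards [hF, Metric.tendstoUniformlyOn_iff.1 hFf _ (half_pos hm)] with n hFn hclose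
  rw [← closure_ball z hr.ne']
  refine Complex.exists_zero_of_forall_mem_frontier_le_norm isBounded_ball hFn (C := ‖f x‖ / 2)
    ?_ (subset_closure (mem_ball_self hr)) ?_
  · rw [frontier_ball z hr.ne']
    intro w hw
    have hfw : ‖f x‖ ≤ ‖f w‖ := isMinOn_iff.1 hmin w hw
    have hdist : ‖f w - F n w‖ < ‖f x‖ / 2 := by
      simpa only [dist_eq_norm] using hclose w (sphere_subset_closedBall hw)
    linarith [norm_sub_norm_le (f w) (F n w)]
  · simpa only [hfz, dist_zero_left] using hclose z (mem_closedBall_self hr.le)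

theorem AnalyticOnNhd.eventually_nhdsNE_ne_zero {𝕜 E : Type*} [NontriviallyNormedField 𝕜]
    [NormedAddCommGroup E] [NormedSpace 𝕜 E] {f : 𝕜 → E} {U : Set 𝕜} {z : 𝕜}
    (hf : AnalyticOnNhd 𝕜 f U) (hU : IsPreconnected U) (hne : ¬ EqOn f 0 U) (hz : z ∈ U) :
    ∀ᶠ w in 𝓝[≠] z, f w ≠ 0 :=
  not_frequently.1 fun h => hne (hf.eqOn_zero_of_preconnected_of_frequently_eq_zero hU hz h)

theorem eventually_nhdsGT_forall_mem_sphere {α : Type*} [PseudoMetricSpace α] {z : α}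
    {p : α → Prop} (h : ∀ᶠ w in 𝓝[≠] z, p w) :
    ∀ᶠ r in 𝓝[>] (0 : ℝ), ∀ w ∈ sphere z r, p w := by
  obtain ⟨ε, hε, hball⟩ := Metric.mem_nhdsWithin_iff.1 h
  filter_upwards [Ioo_mem_nhdsGT hε] with r hr w hw
  exact hball ⟨sphere_subset_ball hr.2 hw, ne_of_mem_sphere hw hr.1.ne'⟩

theorem Set.Finite.eventually_pairwiseDisjoint_closedBall {α : Type*} [MetricSpace α]
    {s : Set α} (hs : s.Finite) : ∀ᶠ r in 𝓝 (0 : ℝ), s.PairwiseDisjoint (closedBall · r) := by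
  have hpair : ∀ p ∈ s.offDiag, ∀ᶠ r in 𝓝 (0 : ℝ), r < dist p.1 p.2 / 2 := fun p hp =>
    eventually_lt_nhds (half_pos (dist_pos.2 hp.2.2))
  filter_upwards [(eventually_all_finite hs.offDiag).2 hpair] with r hr a ha b hb hab
  exact closedBall_disjoint_closedBall (by linarith [hr (a, b) ⟨ha, hb, hab⟩])

theorem Set.exists_finset_card_le_superset {α : Type*} {Z : Set α} {k : ℕ}
    (h : ∀ T : Finset α, ↑T ⊆ Z → T.card ≤ k) : ∃ S : Finset α, S.card ≤ k ∧ Z ⊆ S := by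
  have hZ : Z.Finite := by
    by_contra hinf
    obtain ⟨T, hTZ, hT⟩ := Set.Infinite.exists_subset_card_eq hinf (k + 1)
    have := h T hTZ
    omega
  exact ⟨hZ.toFinset, h _ (by simp), by simp⟩

theorem TendstoLocallyUniformlyOn.eventually_card_le_of_subset_zeros {ι : Type*}
    {l : Filter ι} {F : ι → ℂ → ℂ} {f : ℂ → ℂ} {D : Set ℂ} (hD : IsOpen D)
    (hDconn : IsPreconnected D) (hFf : TendstoLocallyUniformlyOn F f l D)
    (hF : ∀ᶠ n in l, DifferentiableOn ℂ (F n) D) (hf : DifferentiableOn ℂ f D)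
    (hne : ¬ EqOn f 0 D) {T : Finset ℂ} (hT : ↑T ⊆ {z ∈ D | f z = 0}) :
    ∀ᶠ n in l, ∀ S : Finset ℂ, (∀ z ∈ D, F n z = 0 → z ∈ S) → T.card ≤ S.card := by
  have hradius : ∀ᶠ r in 𝓝[>] (0 : ℝ), (T : Set ℂ).PairwiseDisjoint (closedBall · r) ∧
      ∀ z ∈ T, closedBall z r ⊆ D ∧ ∀ w ∈ sphere z r, f w ≠ 0 := by
    refine (T.finite_toSet.eventually_pairwiseDisjoint_closedBall.filter_mono
      nhdsWithin_le_nhds).and ((eventually_all_finset T).2 fun z hz => ?_)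
    exact ((eventually_closedBall_subset (hD.mem_nhds (hT hz).1)).filter_mono
      nhdsWithin_le_nhds).and
      (eventually_nhdsGT_forall_mem_sphere
        ((hf.analyticOnNhd hD).eventually_nhdsNE_ne_zero hDconn hne (hT hz).1))
  obtain ⟨r, ⟨hdisj, hball⟩, hr⟩ := (hradius.and self_mem_nhdsWithin).exists
  have hzero : ∀ᶠ n in l, ∀ z ∈ T, ∃ w ∈ closedBall z r, F n w = 0 := by
    refine (eventually_all_finset T).2 fun z hz => ?_
    refine TendstoUniformlyOn.eventually_exists_zero_mem_closedBall hr
      ((tendstoLocallyUniformlyOn_iff_forall_isCompact hD).1 hFf _ (hball z hz).1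
        (isCompact_closedBall z r))
      (hF.mono fun n hFn => ?_) (hf.continuousOn.mono (sphere_subset_closedBall.trans
        (hball z hz).1)) (hT hz).2 (hball z hz).2
    exact (hFn.mono (hball z hz).1).diffContOnCl_ball subset_rfl
  filter_upwards [hzero] with n hn S hS
  refine Finset.card_le_card_of_forall_subsingleton (fun z w => w ∈ closedBall z r)
    (fun z hz => ?_) fun w _ a ha b hb => hdisj.elim_set ha.1 hb.1 w ha.2 hb.2
  obtain ⟨w, hw, hFw⟩ := hn z hz
  exact ⟨w, hS w ((hball z hz).1 hw) hFw, hw⟩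

theorem hurwitz_at_most_k_zeros_general
    (D : Set ℂ) (hD : IsOpen D) (hDconn : IsPreconnected D)
    (k : ℕ) (f : ℂ → ℂ) (fn : ℕ → ℂ → ℂ)
    (hfn : ∀ n, DifferentiableOn ℂ (fn n) D)
    (hconv : TendstoLocallyUniformlyOn fn f atTop D)
    (hzeros : ∀ n, ∃ S : Finset ℂ, S.card ≤ k ∧ ∀ z ∈ D, fn n z = 0 → z ∈ S) :
    (∀ z ∈ D, f z = 0) ∨ ∃ S : Finset ℂ, S.card ≤ k ∧ ∀ z ∈ D, f z = 0 → z ∈ S := by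
  refine or_iff_not_imp_left.2 fun hne => ?_
  have hf : DifferentiableOn ℂ f D := hconv.differentiableOn (Eventually.of_forall hfn) hD
  obtain ⟨S, hS, hZS⟩ := Set.exists_finset_card_le_superset (Z := {z ∈ D | f z = 0})
    fun T hT => by
      obtain ⟨n, hn⟩ := (hconv.eventually_card_le_of_subset_zeros hD hDconn
        (Eventually.of_forall hfn) hf hne hT).exists
      obtain ⟨Sn, hSn, hzSn⟩ := hzeros n
      exact (hn Sn hzSn).trans hSn
  exact ⟨S, hS, fun z hz hfz => hZS ⟨hz, hfz⟩⟩

/-- Hurwitz's theorem: if holomorphic functions `f_n` on a domain `D` converge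
locally uniformly to `f` and each `f_n` has at most `k` zeros in `D`, then either
`f ≡ 0` on `D` or `f` has at most `k` zeros in `D`. -/
theorem hurwitz_at_most_k_zeros
    (D : Set ℂ) (hD : IsOpen D) (hDconn : IsPreconnected D) (hDne : D.Nonempty)
    (k : ℕ) (f : ℂ → ℂ) (fn : ℕ → ℂ → ℂ)
    (hfn : ∀ n, DifferentiableOn ℂ (fn n) D)
    (hconv : TendstoLocallyUniformlyOn fn f atTop D)
    (hzeros : ∀ n, ∃ S : Finset ℂ, S.card ≤ k ∧ ∀ z ∈ D, fn n z = 0 → z ∈ S) :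
    (∀ z ∈ D, f z = 0) ∨ ∃ S : Finset ℂ, S.card ≤ k ∧ ∀ z ∈ D, f z = 0 → z ∈ S :=
  hurwitz_at_most_k_zeros_general D hD hDconn k f fn hfn hconv hzeros
end

section
/- Let h : ℝ → ℝ be continuous with h(x+1) = -h(x) for all x, and suppose there exists a point x₀ where h attains its maximum, and points x₀ < z₁ < z₂ < z₃ < x₀ + 1 with h(z₁) < h(z₂) and h(z₃) < h(z₂) (i.e., h is not monotone on [x₀, x₀+1)). Then there exists c ∈ ℝ such that the function h + c has at least four zeros in the interval [x₀, x₀ + 2). -/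
/-!
Pick a level `v` strictly between `max (h z₁) (h z₃)` and `h z₂`. Since `h x₀` is the maximum,
`h` crosses `v` on each of `(x₀, z₁)`, `(z₁, z₂)` and `(z₂, z₃)`. Antiperiodicity makes `-h x₀`
the minimum, so `-h x₀ < v < h x₀`; hence `h` takes the value `-v` somewhere in `(x₀, x₀ + 1)`,
and one period later the value `v`, giving a fourth crossing in `(x₀ + 1, x₀ + 2)`.
-/

open Set

namespace Function.Antiperiodic

variable {β : Type*} [AddCommGroup β] [LinearOrder β] [IsOrderedAddMonoid β]

theorem neg_le_of_forall_le {α : Type*} [Add α] {f : α → β} {c x₀ : α}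
    (hf : Antiperiodic f c) (hmax : ∀ x, f x ≤ f x₀) (x : α) : -f x₀ ≤ f x := by
  simpa [hf x, neg_le] using hmax (x + c)

theorem exists_mem_Ioo_apply_eq [TopologicalSpace β] [OrderClosedTopology β]
    {f : ℝ → β} {c : ℝ} (hf : Antiperiodic f c) (hcont : Continuous f) (hc : 0 < c) (a : ℝ)
    {v : β} (hv : v ∈ Ioo (-f a) (f a)) : ∃ t ∈ Ioo (a + c) (a + 2 * c), f t = v := by
  have hv' : -v ∈ Ioo (f (a + c)) (f a) := by
    rw [hf a]
    exact ⟨neg_lt_neg hv.2, neg_lt.mp hv.1⟩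
  obtain ⟨s, ⟨has, hsa⟩, hs⟩ :=
    intermediate_value_Ioo' (by linarith) hcont.continuousOn hv'
  exact ⟨s + c, ⟨by linarith, by linarith⟩, by rw [hf s, hs, neg_neg]⟩

end Function.Antiperiodic

/-- Let `h : ℝ → ℝ` be continuous with `h(x+1) = -h(x)`, attaining its maximum at
`x₀`, and not monotone on `[x₀, x₀+1)` in the sense that there are
`x₀ < z₁ < z₂ < z₃ < x₀+1` with `h(z₁) < h(z₂)` and `h(z₃) < h(z₂)`.  Then some
level set `{h = -c}` contains at least four points in `[x₀, x₀+2)`. -/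
theorem antiperiodic_not_monotone_four_zeros
    (h : ℝ → ℝ) (hcont : Continuous h)
    (hanti : ∀ x : ℝ, h (x + 1) = -h x)
    (x₀ : ℝ) (hmax : ∀ x : ℝ, h x ≤ h x₀)
    (z₁ z₂ z₃ : ℝ)
    (hz : x₀ < z₁ ∧ z₁ < z₂ ∧ z₂ < z₃ ∧ z₃ < x₀ + 1)
    (h12 : h z₁ < h z₂) (h32 : h z₃ < h z₂) :
    ∃ c : ℝ, ∃ t : Fin 4 → ℝ, StrictMono t ∧
      (∀ i, t i ∈ Set.Ico x₀ (x₀ + 2)) ∧ ∀ i, h (t i) + c = 0 := by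
  obtain ⟨hx₀z₁, hz₁z₂, hz₂z₃, hz₃x₀⟩ := hz
  have hanti : Function.Antiperiodic h 1 := hanti
  obtain ⟨v, hv_lo, hv_hi⟩ := exists_between (max_lt h12 h32)
  obtain ⟨hv₁, hv₃⟩ := max_lt_iff.mp hv_lo
  have hv_max : v < h x₀ := hv_hi.trans_le (hmax z₂)
  have hv_min : -h x₀ < v := (hanti.neg_le_of_forall_le hmax z₃).trans_lt hv₃
  obtain ⟨t₁, ht₁, hv_t₁⟩ := intermediate_value_Ioo' hx₀z₁.le hcont.continuousOn ⟨hv₁, hv_max⟩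
  obtain ⟨t₂, ht₂, hv_t₂⟩ := intermediate_value_Ioo hz₁z₂.le hcont.continuousOn ⟨hv₁, hv_hi⟩
  obtain ⟨t₃, ht₃, hv_t₃⟩ := intermediate_value_Ioo' hz₂z₃.le hcont.continuousOn ⟨hv₃, hv_hi⟩
  obtain ⟨t₄, ht₄, hv_t₄⟩ := hanti.exists_mem_Ioo_apply_eq hcont one_pos x₀ ⟨hv_min, hv_max⟩
  refine ⟨-v, ![t₁, t₂, t₃, t₄], ?_, ?_, ?_⟩
  · simp only [strictMono_vecCons, Fin.isValue, Matrix.cons_val_zero, Nat.reduceAdd,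
      Matrix.cons_val_fin_one, strictMono_vecEmpty, and_true]
    exact ⟨ht₁.2.trans ht₂.1, ht₂.2.trans ht₃.1, ht₃.2.trans (hz₃x₀.trans ht₄.1)⟩
  · simp only [mem_Ico, Fin.forall_fin_succ, Fin.isValue, Matrix.cons_val_zero,
      Matrix.cons_val_succ, Matrix.cons_val_fin_one, forall_const]
    refine ⟨⟨?_, ?_⟩, ⟨?_, ?_⟩, ⟨?_, ?_⟩, ⟨?_, ?_⟩⟩ <;>
      linarith [ht₁.1, ht₁.2, ht₂.1, ht₂.2, ht₃.1, ht₃.2, ht₄.1, ht₄.2]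
  · simp [Fin.forall_fin_succ, hv_t₁, hv_t₂, hv_t₃, hv_t₄]
end
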